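/- Let S, X₁, X₂, Z be mutually independent random variables with values in {+1,-1}, where P(S = 1) = P(S = -1) = 1/2, P(Z = 1) = p, P(X₁ = 1) = q₁ and P(X₂ = 1) = q₂. Define Y₁ = S·X₁ (real multiplication) and Y₂ = X₂ + Z (real addition, with values in {-2,0,2}), and Y = (Y₁,Y₂). Then I(X₁ ; Y | S, X₂) = h₂(q₁) and I(X₁,X₂ ; Y) = g(p,q₂) - h₂(p), where g(p,q₂) = -p q₂ log₂(p q₂) - (1-p)(1-q₂) log₂((1-p)(1-q₂)) - (p*q₂) log₂(p*q₂). -/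

import Mathlib

open scoped BigOperators
open Classical

noncomputable section

/-- Probability that the random variable `X` equals `x` under the pmf `p`. -/
def pr {Ω α : Type*} [Fintype Ω] (p : Ω → ℝ) (X : Ω → α) (x : α) : ℝ :=
  ∑ ω : Ω, if X ω = x then p ω else 0

/-- Shannon entropy (in bits), with the convention `0 · log₂ 0 = 0`. -/
def ent {Ω α : Type*} [Fintype Ω] (p : Ω → ℝ) (X : Ω → α) : ℝ :=
  -∑ x ∈ Finset.univ.image X, pr p X x * Real.logb 2 (pr p X x)

/-- Conditional entropy `H(X|Y) = H(X,Y) - H(Y)`. -/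
def condEnt {Ω α β : Type*} [Fintype Ω] (p : Ω → ℝ) (X : Ω → α) (Y : Ω → β) : ℝ :=
  ent p (fun ω => (X ω, Y ω)) - ent p Y

/-- Mutual information `I(X;Y) = H(X) + H(Y) - H(X,Y)`. -/
def mi {Ω α β : Type*} [Fintype Ω] (p : Ω → ℝ) (X : Ω → α) (Y : Ω → β) : ℝ :=
  ent p X + ent p Y - ent p (fun ω => (X ω, Y ω))

/-- Conditional mutual information `I(X;Y|Z) = H(X,Z) + H(Y,Z) - H(X,Y,Z) - H(Z)`. -/
def cmi {Ω α β γ : Type*} [Fintype Ω] (p : Ω → ℝ) (X : Ω → α) (Y : Ω → β) (Z : Ω → γ) : ℝ :=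
  ent p (fun ω => (X ω, Z ω)) + ent p (fun ω => (Y ω, Z ω))
    - ent p (fun ω => (X ω, Y ω, Z ω)) - ent p Z

/-- `p` is a probability mass function on the finite sample space `Ω`. -/
def IsPMF {Ω : Type*} [Fintype Ω] (p : Ω → ℝ) : Prop :=
  (∀ ω, 0 ≤ p ω) ∧ ∑ ω : Ω, p ω = 1

/-- The random variables `X` and `Y` are independent under `p`. -/
def IndepRV {Ω α β : Type*} [Fintype Ω] (p : Ω → ℝ) (X : Ω → α) (Y : Ω → β) : Prop :=
  ∀ x y, pr p (fun ω => (X ω, Y ω)) (x, y) = pr p X x * pr p Y y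

end

noncomputable section
/-- Binary entropy function `h₂` (in bits). -/
def binEnt (a : ℝ) : ℝ := -(a * Real.logb 2 a) - (1 - a) * Real.logb 2 (1 - a)

/-- Binary convolution `a * b = a(1-b) + b(1-a)`. -/
def bconv (a b : ℝ) : ℝ := a * (1 - b) + b * (1 - a)

/-- The function `g(p,q₂)` of Example 6. -/
def gfun (p q₂ : ℝ) : ℝ :=
  -(p * q₂ * Real.logb 2 (p * q₂))
    - (1 - p) * (1 - q₂) * Real.logb 2 ((1 - p) * (1 - q₂))
    - bconv p q₂ * Real.logb 2 (bconv p q₂)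
end

/-!
Since `S² = X₁² = 1`, the outputs can be decoded: `X₁ = S·Y₁`, `S = X₁·Y₁` and `Z = Y₂ - X₂`.
Hence `(Y, S, X₂)` and `(X₁, Y, S, X₂)` both carry exactly the information of `(S, X₁, X₂, Z)`,
and the conditional mutual information collapses to `H(X₁, S, X₂) - H(S, X₂) = H(X₁)`.
Likewise `((X₁, X₂), Y)` carries the information of `((X₁, X₂), (S, Z))`, so
`I(X₁, X₂; Y) = H(Y) - H(S, Z) = H(Y₁) + H(Y₂) - H(S) - H(Z)`. Here `Y₁ = S·X₁` is uniform,
`Y₂ = X₂ + Z` takes the values `2, 0, -2` with probabilities `p q₂`, `p * q₂`, `(1-p)(1-q₂)`,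
and every independence used comes from grouping the four factors of the joint law.
-/

section Probability

variable {Ω α β γ δ : Type*} [Fintype Ω] {μ : Ω → ℝ}

theorem pr_congr {X : Ω → α} {Y : Ω → β} {x : α} {y : β}
    (h : ∀ ω, X ω = x ↔ Y ω = y) : pr μ X x = pr μ Y y :=
  Finset.sum_congr rfl fun ω _ => by simp only [h]

theorem pr_eq_zero_of_forall_ne {X : Ω → α} {x : α} (h : ∀ ω, X ω ≠ x) : pr μ X x = 0 :=
  Finset.sum_eq_zero fun ω _ => if_neg (h ω)

theorem sum_pr_eq_one (hμ : IsPMF μ) {X : Ω → α} {s : Finset α} (hs : ∀ ω, X ω ∈ s) :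
    ∑ x ∈ s, pr μ X x = 1 := by
  unfold pr
  rw [Finset.sum_comm]
  simpa only [Finset.sum_ite_eq, hs, if_true] using hμ.2

theorem pr_eq_sum_pr_prod {X : Ω → α} {Y : Ω → β} {t : Finset β} (ht : ∀ ω, Y ω ∈ t)
    (x : α) : pr μ X x = ∑ y ∈ t, pr μ (fun ω => (X ω, Y ω)) (x, y) := by
  unfold pr
  rw [Finset.sum_comm]
  refine Finset.sum_congr rfl fun ω _ => ?_
  by_cases hx : X ω = x <;> simp [hx, ht ω]

theorem pr_comp_eq_sum {X : Ω → α} {s : Finset α} (hs : ∀ ω, X ω ∈ s) (f : α → β) (y : β) :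
    pr μ (fun ω => f (X ω)) y = ∑ x ∈ s with f x = y, pr μ X x := by
  unfold pr
  rw [Finset.sum_comm]
  refine Finset.sum_congr rfl fun ω _ => ?_
  rw [Finset.sum_ite_eq]
  simp [hs ω]

theorem pr_map₂_eq_sum {A : Ω → α} {B : Ω → β} {s : Finset α} {t : Finset β}
    (hs : ∀ ω, A ω ∈ s) (ht : ∀ ω, B ω ∈ t) (h : IndepRV μ A B) (f : α → β → γ) (y : γ) :
    pr μ (fun ω => f (A ω) (B ω)) y
      = ∑ a ∈ s, ∑ b ∈ t, if f a b = y then pr μ A a * pr μ B b else 0 := by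
  rw [pr_comp_eq_sum (X := fun ω => (A ω, B ω)) (s := s ×ˢ t)
    (fun ω => Finset.mem_product.2 ⟨hs ω, ht ω⟩) (fun v => f v.1 v.2), Finset.sum_filter,
    Finset.sum_product]
  exact Finset.sum_congr rfl fun a _ => Finset.sum_congr rfl fun b _ => by rw [h]

theorem indepRV_of_pr_eq_mul (hμ : IsPMF μ) {A : Ω → α} {B : Ω → β}
    (F : α → ℝ) (G : β → ℝ) (h : ∀ a b, pr μ (fun ω => (A ω, B ω)) (a, b) = F a * G b) :
    IndepRV μ A B := by
  have hA : ∀ ω, A ω ∈ Finset.univ.image A := by simp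
  have hB : ∀ ω, B ω ∈ Finset.univ.image B := by simp
  have hpA : ∀ a, pr μ A a = F a * ∑ b ∈ Finset.univ.image B, G b := by
    intro a
    simp only [pr_eq_sum_pr_prod hB a, h, Finset.mul_sum]
  have hpB : ∀ b, pr μ B b = (∑ a ∈ Finset.univ.image A, F a) * G b := by
    intro b
    rw [pr_eq_sum_pr_prod hA b, Finset.sum_mul]
    refine Finset.sum_congr rfl fun a _ => ?_
    rw [← h]
    exact pr_congr fun ω => by simp only [Prod.mk.injEq, and_comm]
  have htotal : (∑ a ∈ Finset.univ.image A, F a) * ∑ b ∈ Finset.univ.image B, G b = 1 := by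
    rw [← sum_pr_eq_one hμ hA, Finset.sum_mul]
    exact Finset.sum_congr rfl fun a _ => (hpA a).symm
  intro a b
  rw [h, hpA, hpB]
  linear_combination (F a * G b) * htotal.symm

theorem IndepRV.comp {A : Ω → α} {B : Ω → β} (h : IndepRV μ A B) (f : α → γ) (g : β → δ) :
    IndepRV μ (fun ω => f (A ω)) (fun ω => g (B ω)) := by
  intro x y
  have hA : ∀ ω, A ω ∈ Finset.univ.image A := by simp
  have hB : ∀ ω, B ω ∈ Finset.univ.image B := by simp
  rw [pr_map₂_eq_sum hA hB h (fun a b => (f a, g b)), pr_comp_eq_sum hA, pr_comp_eq_sum hB,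
    Finset.sum_mul_sum, Finset.sum_filter]
  refine Finset.sum_congr rfl fun a _ => ?_
  by_cases hfa : f a = x <;> simp [hfa, Finset.sum_filter]

end Probability

section Entropy

variable {Ω α β : Type*} [Fintype Ω] {μ : Ω → ℝ}

theorem ent_eq_sum_of_forall_mem {X : Ω → α} {s : Finset α} (hs : ∀ ω, X ω ∈ s) :
    ent μ X = -∑ x ∈ s, pr μ X x * Real.logb 2 (pr μ X x) := by
  unfold ent
  congr 1
  refine Finset.sum_subset (fun x hx => ?_) fun x _ hx => ?_
  · obtain ⟨ω, -, rfl⟩ := Finset.mem_image.1 hx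
    exact hs ω
  · rw [pr_eq_zero_of_forall_ne fun ω hω =>
      hx (Finset.mem_image.2 ⟨ω, Finset.mem_univ _, hω⟩)]
    simp

theorem mul_logb_mul (a b : ℝ) :
    a * b * Real.logb 2 (a * b) = b * (a * Real.logb 2 a) + a * (b * Real.logb 2 b) := by
  have h := Real.negMulLog_mul a b
  simp only [Real.negMulLog] at h
  simp only [Real.logb]
  linear_combination (-(Real.log 2)⁻¹) * h

theorem ent_prod_of_indepRV (hμ : IsPMF μ) {X : Ω → α} {Y : Ω → β} (h : IndepRV μ X Y) :
    ent μ (fun ω => (X ω, Y ω)) = ent μ X + ent μ Y := by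
  have hX : ∀ ω, X ω ∈ Finset.univ.image X := by simp
  have hY : ∀ ω, Y ω ∈ Finset.univ.image Y := by simp
  rw [ent_eq_sum_of_forall_mem fun ω => Finset.mem_product.2 ⟨hX ω, hY ω⟩,
    ent_eq_sum_of_forall_mem hX, ent_eq_sum_of_forall_mem hY, Finset.sum_product]
  simp only [h _ _, mul_logb_mul, Finset.sum_add_distrib, ← Finset.sum_mul, ← Finset.mul_sum,
    sum_pr_eq_one hμ hX, sum_pr_eq_one hμ hY]
  ring

theorem ent_comp_of_injOn {V : Ω → β} (f : β → α) (hf : Set.InjOn f (Set.range V)) :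
    ent μ (fun ω => f (V ω)) = ent μ V := by
  have himage : Finset.univ.image (fun ω => f (V ω)) = (Finset.univ.image V).image f := by
    rw [Finset.image_image]
    rfl
  have hinj : Set.InjOn f (Finset.univ.image V) := by simpa using hf
  unfold ent
  rw [himage, Finset.sum_image hinj]
  refine congrArg _ (Finset.sum_congr rfl fun v hv => ?_)
  obtain ⟨ω₀, -, rfl⟩ := Finset.mem_image.1 hv
  rw [pr_congr fun ω => hf.eq_iff ⟨ω, rfl⟩ ⟨ω₀, rfl⟩]

end Entropy

theorem forall_mem_one_neg_one {Ω : Type*} {X : Ω → ℝ} (hX : ∀ ω, X ω = 1 ∨ X ω = -1) :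
    ∀ ω, X ω ∈ ({1, -1} : Finset ℝ) := by
  simpa using hX

section PlusMinusOne

variable {Ω : Type*} [Fintype Ω] {μ : Ω → ℝ}

theorem pr_neg_one_eq (hμ : IsPMF μ) {X : Ω → ℝ} (hX : ∀ ω, X ω = 1 ∨ X ω = -1) :
    pr μ X (-1) = 1 - pr μ X 1 := by
  have := sum_pr_eq_one hμ (forall_mem_one_neg_one hX)
  rw [Finset.sum_pair (by norm_num)] at this
  linarith

theorem ent_eq_binEnt (hμ : IsPMF μ) {X : Ω → ℝ} (hX : ∀ ω, X ω = 1 ∨ X ω = -1) :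
    ent μ X = binEnt (pr μ X 1) := by
  rw [ent_eq_sum_of_forall_mem (forall_mem_one_neg_one hX), Finset.sum_pair (by norm_num),
    pr_neg_one_eq hμ hX, binEnt]
  ring

theorem binEnt_half : binEnt (1 / 2) = 1 := by
  have hlog : Real.logb 2 (1 / 2) = -1 := by
    rw [one_div, Real.logb_inv, Real.logb_self_eq_one one_lt_two]
  rw [binEnt, show (1 : ℝ) - 1 / 2 = 1 / 2 by norm_num, hlog]
  norm_num

theorem pr_mul_eq_half (hμ : IsPMF μ) {S X : Ω → ℝ} (hS : ∀ ω, S ω = 1 ∨ S ω = -1)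
    (hX : ∀ ω, X ω = 1 ∨ X ω = -1) (h : IndepRV μ X S) (hS1 : pr μ S 1 = 1 / 2) :
    pr μ (fun ω => S ω * X ω) 1 = 1 / 2 := by
  rw [pr_map₂_eq_sum (forall_mem_one_neg_one hX) (forall_mem_one_neg_one hS) h (fun x s => s * x)]
  simp only [Finset.sum_pair (show (1 : ℝ) ≠ -1 by norm_num)]
  norm_num [pr_neg_one_eq hμ hS, pr_neg_one_eq hμ hX, hS1]
  ring

theorem ent_mul_eq_one (hμ : IsPMF μ) {S X : Ω → ℝ} (hS : ∀ ω, S ω = 1 ∨ S ω = -1)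
    (hX : ∀ ω, X ω = 1 ∨ X ω = -1) (h : IndepRV μ X S) (hS1 : pr μ S 1 = 1 / 2) :
    ent μ (fun ω => S ω * X ω) = 1 := by
  have hSX : ∀ ω, S ω * X ω = 1 ∨ S ω * X ω = -1 := fun ω => by
    rcases hS ω with h | h <;> rcases hX ω with h' | h' <;> norm_num [h, h']
  rw [ent_eq_binEnt hμ hSX, pr_mul_eq_half hμ hS hX h hS1, binEnt_half]

theorem ent_add_eq_gfun (hμ : IsPMF μ) {X Z : Ω → ℝ} (hX : ∀ ω, X ω = 1 ∨ X ω = -1)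
    (hZ : ∀ ω, Z ω = 1 ∨ Z ω = -1) (h : IndepRV μ X Z) :
    ent μ (fun ω => X ω + Z ω) = gfun (pr μ Z 1) (pr μ X 1) := by
  have hXZ : ∀ ω, X ω + Z ω ∈ ({2, 0, -2} : Finset ℝ) := fun ω => by
    rcases hX ω with h | h <;> rcases hZ ω with h' | h' <;> norm_num [h, h']
  have hpr := pr_map₂_eq_sum (forall_mem_one_neg_one hX) (forall_mem_one_neg_one hZ) h (· + ·)
  simp only [Finset.sum_pair (show (1 : ℝ) ≠ -1 by norm_num)] at hpr
  have h2 : pr μ (fun ω => X ω + Z ω) 2 = pr μ Z 1 * pr μ X 1 := by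
    norm_num [hpr]
    ring
  have h0 : pr μ (fun ω => X ω + Z ω) 0 = bconv (pr μ Z 1) (pr μ X 1) := by
    norm_num [hpr, pr_neg_one_eq hμ hX, pr_neg_one_eq hμ hZ, bconv]
    ring
  have hm2 : pr μ (fun ω => X ω + Z ω) (-2) = (1 - pr μ Z 1) * (1 - pr μ X 1) := by
    norm_num [hpr, pr_neg_one_eq hμ hX, pr_neg_one_eq hμ hZ]
    ring
  rw [ent_eq_sum_of_forall_mem hXZ, Finset.sum_insert (by norm_num),
    Finset.sum_pair (by norm_num), h2, h0, hm2, gfun]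
  ring

end PlusMinusOne

section FadingChannel

variable {Ω : Type*} [Fintype Ω] {μ : Ω → ℝ} {S X₁ X₂ Z : Ω → ℝ}

theorem cmi_eq_binEnt (hμ : IsPMF μ) (hS : ∀ ω, S ω = 1 ∨ S ω = -1)
    (hX₁ : ∀ ω, X₁ ω = 1 ∨ X₁ ω = -1) (h : IndepRV μ X₁ fun ω => (S ω, X₂ ω)) :
    cmi μ X₁ (fun ω => (S ω * X₁ ω, X₂ ω + Z ω)) (fun ω => (S ω, X₂ ω))
      = binEnt (pr μ X₁ 1) := by
  have hYSX₂ : ent μ (fun ω => ((S ω * X₁ ω, X₂ ω + Z ω), (S ω, X₂ ω)))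
      = ent μ (fun ω => (S ω, X₁ ω, X₂ ω, Z ω)) := by
    refine ent_comp_of_injOn (V := fun ω => (S ω, X₁ ω, X₂ ω, Z ω))
      (fun v : ℝ × ℝ × ℝ × ℝ => ((v.1 * v.2.1, v.2.2.1 + v.2.2.2), (v.1, v.2.2.1)))
      (Set.LeftInvOn.injOn
        (f₁' := fun w : (ℝ × ℝ) × ℝ × ℝ => (w.2.1, w.2.1 * w.1.1, w.2.2, w.1.2 - w.2.2)) ?_)
    rintro _ ⟨ω, rfl⟩
    have hSS : S ω * (S ω * X₁ ω) = X₁ ω := by rcases hS ω with h | h <;> simp [h]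
    simp [hSS]
  have hX₁YSX₂ : ent μ (fun ω => (X₁ ω, (S ω * X₁ ω, X₂ ω + Z ω), (S ω, X₂ ω)))
      = ent μ (fun ω => (S ω, X₁ ω, X₂ ω, Z ω)) := by
    refine ent_comp_of_injOn (V := fun ω => (S ω, X₁ ω, X₂ ω, Z ω))
      (fun v : ℝ × ℝ × ℝ × ℝ => (v.2.1, (v.1 * v.2.1, v.2.2.1 + v.2.2.2), (v.1, v.2.2.1)))
      (Set.LeftInvOn.injOn
        (f₁' := fun w : ℝ × (ℝ × ℝ) × ℝ × ℝ => (w.2.2.1, w.1, w.2.2.2, w.2.1.2 - w.2.2.2)) ?_)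
    rintro _ ⟨ω, rfl⟩
    simp
  rw [cmi, hYSX₂, hX₁YSX₂, ent_prod_of_indepRV hμ h, ent_eq_binEnt hμ hX₁]
  ring

theorem mi_eq_ent_sub_ent (hμ : IsPMF μ) (hX₁ : ∀ ω, X₁ ω = 1 ∨ X₁ ω = -1)
    (h : IndepRV μ (fun ω => (X₁ ω, X₂ ω)) fun ω => (S ω, Z ω)) (hSZ : IndepRV μ S Z)
    (hY : IndepRV μ (fun ω => S ω * X₁ ω) fun ω => X₂ ω + Z ω) :
    mi μ (fun ω => (X₁ ω, X₂ ω)) (fun ω => (S ω * X₁ ω, X₂ ω + Z ω))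
      = ent μ (fun ω => S ω * X₁ ω) + ent μ (fun ω => X₂ ω + Z ω) - ent μ S - ent μ Z := by
  have hXY : ent μ (fun ω => ((X₁ ω, X₂ ω), (S ω * X₁ ω, X₂ ω + Z ω)))
      = ent μ (fun ω => ((X₁ ω, X₂ ω), (S ω, Z ω))) := by
    refine ent_comp_of_injOn (V := fun ω => ((X₁ ω, X₂ ω), (S ω, Z ω)))
      (fun v : (ℝ × ℝ) × ℝ × ℝ => (v.1, (v.2.1 * v.1.1, v.1.2 + v.2.2)))
      (Set.LeftInvOn.injOn
        (f₁' := fun w : (ℝ × ℝ) × ℝ × ℝ => (w.1, (w.2.1 * w.1.1, w.2.2 - w.1.2))) ?_)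
    rintro _ ⟨ω, rfl⟩
    have hXX : S ω * X₁ ω * X₁ ω = S ω := by rcases hX₁ ω with h | h <;> simp [h]
    simp [hXX]
  rw [mi, hXY, ent_prod_of_indepRV hμ h, ent_prod_of_indepRV hμ hSZ,
    ent_prod_of_indepRV hμ hY]
  ring

end FadingChannel

theorem example6_mutual_informations_general
    {Ω : Type*} [Fintype Ω]
    (μ : Ω → ℝ) (hμ : IsPMF μ)
    (S X₁ X₂ Z : Ω → ℝ) (p q₁ q₂ : ℝ)
    (hSrange : ∀ ω, S ω = 1 ∨ S ω = -1)
    (hX₁range : ∀ ω, X₁ ω = 1 ∨ X₁ ω = -1)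
    (hX₂range : ∀ ω, X₂ ω = 1 ∨ X₂ ω = -1)
    (hZrange : ∀ ω, Z ω = 1 ∨ Z ω = -1)
    (hIndep : ∀ a b c d : ℝ,
      pr μ (fun ω => (S ω, X₁ ω, X₂ ω, Z ω)) (a, b, c, d)
        = pr μ S a * pr μ X₁ b * pr μ X₂ c * pr μ Z d)
    (hS1 : pr μ S 1 = 1/2)
    (hZ : pr μ Z 1 = p) (hX₁ : pr μ X₁ 1 = q₁) (hX₂ : pr μ X₂ 1 = q₂) :
    cmi μ X₁ (fun ω => (S ω * X₁ ω, X₂ ω + Z ω)) (fun ω => (S ω, X₂ ω)) = binEnt q₁ ∧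
    mi μ (fun ω => (X₁ ω, X₂ ω)) (fun ω => (S ω * X₁ ω, X₂ ω + Z ω))
      = gfun p q₂ - binEnt p := by
  have hperm : ∀ {T : Type} (W : Ω → T) (w : T) (a b c d : ℝ),
      (∀ ω, W ω = w ↔ (S ω, X₁ ω, X₂ ω, Z ω) = (a, b, c, d)) →
      pr μ W w = pr μ S a * pr μ X₁ b * pr μ X₂ c * pr μ Z d :=
    fun W w a b c d h => (pr_congr h).trans (hIndep a b c d)
  have hX₁_SX₂Z : IndepRV μ X₁ fun ω => (S ω, X₂ ω, Z ω) :=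
    indepRV_of_pr_eq_mul hμ (pr μ X₁) (fun v => pr μ S v.1 * pr μ X₂ v.2.1 * pr μ Z v.2.2)
      fun b ⟨a, c, d⟩ =>
        (hperm _ _ a b c d fun ω => by simp only [Prod.mk.injEq]; tauto).trans (by ring)
  have hX₁X₂_SZ : IndepRV μ (fun ω => (X₁ ω, X₂ ω)) fun ω => (S ω, Z ω) :=
    indepRV_of_pr_eq_mul hμ (fun v => pr μ X₁ v.1 * pr μ X₂ v.2)
      (fun v => pr μ S v.1 * pr μ Z v.2) fun ⟨b, c⟩ ⟨a, d⟩ =>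
        (hperm _ _ a b c d fun ω => by simp only [Prod.mk.injEq]; tauto).trans (by ring)
  have hSX₁_X₂Z : IndepRV μ (fun ω => (S ω, X₁ ω)) fun ω => (X₂ ω, Z ω) :=
    indepRV_of_pr_eq_mul hμ (fun v => pr μ S v.1 * pr μ X₁ v.2)
      (fun v => pr μ X₂ v.1 * pr μ Z v.2) fun ⟨a, b⟩ ⟨c, d⟩ =>
        (hperm _ _ a b c d fun ω => by simp only [Prod.mk.injEq]; tauto).trans (by ring)
  refine ⟨?_, ?_⟩
  · rw [cmi_eq_binEnt hμ hSrange hX₁range (hX₁_SX₂Z.comp id fun v => (v.1, v.2.1)), hX₁]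
  · rw [mi_eq_ent_sub_ent hμ hX₁range hX₁X₂_SZ (hSX₁_X₂Z.comp Prod.fst Prod.snd)
        (hSX₁_X₂Z.comp (fun v => v.1 * v.2) fun v => v.1 + v.2),
      ent_mul_eq_one hμ hSrange hX₁range (hX₁_SX₂Z.comp id Prod.fst) hS1,
      ent_add_eq_gfun hμ hX₂range hZrange (hX₁X₂_SZ.comp Prod.snd Prod.snd),
      ent_eq_binEnt hμ hSrange, ent_eq_binEnt hμ hZrange, hS1, binEnt_half, hZ, hX₂]
    ring

/-- **Example 6, evaluation of the capacity formula.**  For mutually independent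
`{+1,-1}`-valued `S, X₁, X₂, Z` with `P(S=1) = P(S=-1) = 1/2`, `P(Z=1) = p`,
`P(X₁=1) = q₁`, `P(X₂=1) = q₂`, and `Y₁ = S·X₁`, `Y₂ = X₂ + Z`, `Y = (Y₁,Y₂)`:
`I(X₁;Y|S,X₂) = h₂(q₁)` and `I(X₁,X₂;Y) = g(p,q₂) - h₂(p)`. -/
theorem example6_mutual_informations
    {Ω : Type*} [Fintype Ω]
    (μ : Ω → ℝ) (hμ : IsPMF μ)
    (S X₁ X₂ Z : Ω → ℝ) (p q₁ q₂ : ℝ)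
    (hSrange : ∀ ω, S ω = 1 ∨ S ω = -1)
    (hX₁range : ∀ ω, X₁ ω = 1 ∨ X₁ ω = -1)
    (hX₂range : ∀ ω, X₂ ω = 1 ∨ X₂ ω = -1)
    (hZrange : ∀ ω, Z ω = 1 ∨ Z ω = -1)
    (hIndep : ∀ a b c d : ℝ,
      pr μ (fun ω => (S ω, X₁ ω, X₂ ω, Z ω)) (a, b, c, d)
        = pr μ S a * pr μ X₁ b * pr μ X₂ c * pr μ Z d)
    (hS1 : pr μ S 1 = 1/2) (hS2 : pr μ S (-1) = 1/2)
    (hZ : pr μ Z 1 = p) (hX₁ : pr μ X₁ 1 = q₁) (hX₂ : pr μ X₂ 1 = q₂) :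
    cmi μ X₁ (fun ω => (S ω * X₁ ω, X₂ ω + Z ω)) (fun ω => (S ω, X₂ ω)) = binEnt q₁ ∧
    mi μ (fun ω => (X₁ ω, X₂ ω)) (fun ω => (S ω * X₁ ω, X₂ ω + Z ω))
      = gfun p q₂ - binEnt p :=
  example6_mutual_informations_general μ hμ S X₁ X₂ Z p q₁ q₂ hSrange hX₁range hX₂range hZrange
    hIndep hS1 hZ hX₁ hX₂
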